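/- Let d ≥ 1, let Λ ⊂ ℝ^d be a closed axis-parallel cube with side length 1, let C > 0 and b ∈ ℝ₊^d, and let f be a smooth function on an open neighborhood of Λ with ‖f‖_{L²(Λ)} > 0 that satisfies, for every multi-index α ∈ ℕ₀^d, the bound ‖∂^α f‖_{L²(Λ)} < 2^{(2d−1)/2} (∏_{j=1}^d (3 C b_j)^{α_j}) ‖f‖_{L²(Λ)}. Then there exists a point x ∈ Λ such that |∂^α f(x)| ≤ 2^{(3d−1)/2} (∏_{j=1}^d (9 C b_j)^{α_j}) ‖f‖_{L²(Λ)} for all multi-indices α ∈ ℕ₀^d. -/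

import Mathlib

open MeasureTheory
open scoped ENNReal

/-!
By Chebyshev's inequality, the set of points of the unit cube where `|∂^α f|` exceeds
`T_α = 2^((3d-1)/2) ∏ (9 C b_j)^{α_j} ‖f‖₂` has measure at most
`(‖∂^α f‖₂ / T_α)² ≤ 2^(-d) 9^(-|α|)`. Summed over all multi-indices these bounds give
`2^(-d) (9/8)^d = (9/16)^d < 1`, the volume of the cube, so some point of the cube lies in
none of these sets.
-/

noncomputable def partialD {d : ℕ} (j : Fin d) (g : (Fin d → ℝ) → ℂ) : (Fin d → ℝ) → ℂ :=
  fun x => fderiv ℝ g x (Pi.single j 1)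

noncomputable def partialDIter {d : ℕ} (j : Fin d) :
    ℕ → ((Fin d → ℝ) → ℂ) → (Fin d → ℝ) → ℂ
  | 0, g => g
  | n + 1, g => partialD j (partialDIter j n g)

/-- The partial derivative `∂^α` with multi-index `α ∈ ℕ₀^d`. -/
noncomputable def multiD {d : ℕ} (α : Fin d → ℕ) (g : (Fin d → ℝ) → ℂ) : (Fin d → ℝ) → ℂ :=
  (List.ofFn fun j : Fin d => partialDIter j (α j)).foldr (fun F h => F h) g

theorem frequently_forall_enorm_lt_of_eLpNorm_le {ι X ε : Type*} [Countable ι]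
    [MeasurableSpace X] [TopologicalSpace ε] [ContinuousENorm ε]
    {μ : Measure X} [IsProbabilityMeasure μ] {p : ℝ≥0∞} (hp0 : p ≠ 0) (hp : p ≠ ∞)
    {g : ι → X → ε} (hg : ∀ i, AEStronglyMeasurable (g i) μ) {t a : ι → ℝ≥0∞}
    (ht0 : ∀ i, t i ≠ 0) (ht : ∀ i, t i ≠ ∞) (hga : ∀ i, eLpNorm (g i) p μ ≤ a i * t i)
    (ha : ∑' i, a i ^ p.toReal < 1) :
    ∃ᵐ x ∂μ, ∀ i, ‖g i x‖ₑ < t i := by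
  have hp' : 0 ≤ p.toReal := ENNReal.toReal_nonneg
  have hbad : ∀ i, μ {x | t i ≤ ‖g i x‖ₑ} ≤ a i ^ p.toReal := fun i => calc
    μ {x | t i ≤ ‖g i x‖ₑ} ≤ (t i)⁻¹ ^ p.toReal * eLpNorm (g i) p μ ^ p.toReal :=
      meas_ge_le_mul_pow_eLpNorm_enorm μ hp0 hp (hg i) (ht0 i) fun h => absurd h (ht i)
    _ ≤ (t i)⁻¹ ^ p.toReal * (a i * t i) ^ p.toReal := by gcongr; exact hga i
    _ = a i ^ p.toReal := by
      rw [ENNReal.mul_rpow_of_nonneg _ _ hp', ← mul_assoc, mul_comm _ (a i ^ _), mul_assoc,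
        ← ENNReal.mul_rpow_of_nonneg _ _ hp', ENNReal.inv_mul_cancel (ht0 i) (ht i),
        ENNReal.one_rpow, mul_one]
  rw [Filter.Frequently]
  intro hall
  have hcover : Set.univ ≤ᵐ[μ] ⋃ i, {x | t i ≤ ‖g i x‖ₑ} :=
    hall.mono fun x hx _ => Set.mem_iUnion.2 (by simpa using hx)
  exact lt_irrefl (1 : ℝ≥0∞) <| calc
    1 = μ Set.univ := measure_univ.symm
    _ ≤ μ (⋃ i, {x | t i ≤ ‖g i x‖ₑ}) := measure_mono_ae hcover
    _ ≤ ∑' i, μ {x | t i ≤ ‖g i x‖ₑ} := measure_iUnion_le _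
    _ ≤ ∑' i, a i ^ p.toReal := ENNReal.tsum_le_tsum hbad
    _ < 1 := ha

theorem ENNReal.tsum_fin_pi_prod {κ : Type*} (d : ℕ) (g : κ → ℝ≥0∞) :
    ∑' α : Fin d → κ, ∏ j, g (α j) = (∑' k, g k) ^ d := by
  induction d with
  | zero => simp
  | succ d ih =>
    rw [← (Fin.consEquiv fun _ => κ).tsum_eq]
    simp only [Fin.consEquiv_apply, Fin.prod_univ_succ, Fin.cons_zero, Fin.cons_succ]
    rw [ENNReal.tsum_prod (f := fun (k : κ) (β : Fin d → κ) => g k * ∏ j, g (β j)), pow_succ',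
      ← ih, ← ENNReal.tsum_mul_right]
    simp only [ENNReal.tsum_mul_left]

theorem List.foldr_apply_induction {β : Type*} {P : β → Prop} (l : List (β → β)) {g : β}
    (hg : P g) (hl : ∀ F ∈ l, ∀ h, P h → P (F h)) : P (l.foldr (fun F h => F h) g) := by
  induction l with
  | nil => exact hg
  | cons F l ih =>
    exact hl F List.mem_cons_self _ (ih fun F' hF' => hl F' (List.mem_cons_of_mem _ hF'))

section Smoothness

variable {d : ℕ} {U : Set (Fin d → ℝ)} {g : (Fin d → ℝ) → ℂ}

theorem ContDiffOn.partialD (hU : IsOpen U) (hg : ContDiffOn ℝ (⊤ : ℕ∞) g U) (j : Fin d) :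
    ContDiffOn ℝ (⊤ : ℕ∞) (partialD j g) U :=
  (ContinuousLinearMap.apply ℝ ℂ (Pi.single j 1)).contDiff.comp_contDiffOn
    (hg.fderiv_of_isOpen hU le_rfl)

theorem ContDiffOn.partialDIter (hU : IsOpen U) (hg : ContDiffOn ℝ (⊤ : ℕ∞) g U) (j : Fin d)
    (n : ℕ) : ContDiffOn ℝ (⊤ : ℕ∞) (partialDIter j n g) U := by
  induction n with
  | zero => exact hg
  | succ n ih => exact ih.partialD hU j

theorem ContDiffOn.multiD (hU : IsOpen U) (hg : ContDiffOn ℝ (⊤ : ℕ∞) g U) (α : Fin d → ℕ) :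
    ContDiffOn ℝ (⊤ : ℕ∞) (multiD α g) U := by
  refine List.foldr_apply_induction (P := (ContDiffOn ℝ (⊤ : ℕ∞) · U)) _ hg fun F hF h hh => ?_
  obtain ⟨j, rfl⟩ := List.mem_ofFn.1 hF
  exact hh.partialDIter hU j (α j)

end Smoothness

theorem multiD_zero {d : ℕ} (g : (Fin d → ℝ) → ℂ) : multiD 0 g = g := by
  refine List.foldr_apply_induction (P := (· = g)) _ rfl fun F hF h hh => ?_
  obtain ⟨j, rfl⟩ := List.mem_ofFn.1 hF
  exact hh

theorem volume_pi_Icc_add_one {d : ℕ} (c : Fin d → ℝ) :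
    volume (Set.univ.pi fun j => Set.Icc (c j) (c j + 1)) = 1 := by
  simp [Real.volume_Icc_pi]

noncomputable def multiIndexWeight (d : ℕ) (α : Fin d → ℕ) : ℝ :=
  2 ^ (-(d : ℝ) / 2) * ∏ j, (1 / 3 : ℝ) ^ α j

theorem multiIndexWeight_nonneg (d : ℕ) (α : Fin d → ℕ) : 0 ≤ multiIndexWeight d α := by
  unfold multiIndexWeight; positivity

theorem ofReal_multiIndexWeight_sq (d : ℕ) (α : Fin d → ℕ) :
    ENNReal.ofReal (multiIndexWeight d α) ^ (2 : ℝ) = 2⁻¹ ^ d * ∏ j, 9⁻¹ ^ α j := by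
  rw [ENNReal.rpow_two, ← ENNReal.ofReal_pow (multiIndexWeight_nonneg d α), multiIndexWeight,
    mul_pow, ← Real.rpow_natCast, ← Real.rpow_mul (by norm_num), ← Finset.prod_pow]
  simp_rw [← pow_mul, mul_comm _ 2, pow_mul]
  rw [ENNReal.ofReal_mul (by positivity), ENNReal.ofReal_prod_of_nonneg (by intros; positivity)]
  norm_num
  simp only [one_div, ENNReal.ofReal_inv_of_pos (by norm_num : (0 : ℝ) < 9), ENNReal.inv_pow,
    ENNReal.ofReal_ofNat]

theorem tsum_ofReal_multiIndexWeight_sq_lt_one {d : ℕ} (hd : 1 ≤ d) :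
    ∑' α : Fin d → ℕ, ENNReal.ofReal (multiIndexWeight d α) ^ (2 : ℝ) < 1 := by
  have hbase : (2⁻¹ * (1 - 9⁻¹)⁻¹ : ℝ≥0∞) < 1 := by
    have h : (1 - 9⁻¹ : ℝ≥0∞) = ENNReal.ofReal (8 / 9) := by
      rw [← ENNReal.ofReal_one, show (9⁻¹ : ℝ≥0∞) = ENNReal.ofReal 9⁻¹ by simp,
        ← ENNReal.ofReal_sub _ (by norm_num)]
      norm_num
    rw [h, ← ENNReal.ofReal_inv_of_pos (by norm_num),
      show (2⁻¹ : ℝ≥0∞) = ENNReal.ofReal 2⁻¹ by simp, ← ENNReal.ofReal_mul (by norm_num),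
      ENNReal.ofReal_lt_one]
    norm_num
  simp_rw [ofReal_multiIndexWeight_sq]
  rw [ENNReal.tsum_mul_left, ENNReal.tsum_fin_pi_prod, ENNReal.tsum_geometric, ← mul_pow]
  exact pow_lt_one₀ zero_le hbase (by omega)

theorem two_rpow_mul_prod_eq_multiIndexWeight_mul {d : ℕ} (C : ℝ) (b : Fin d → ℝ)
    (α : Fin d → ℕ) (N : ℝ) :
    2 ^ ((2 * (d : ℝ) - 1) / 2) * (∏ j, (3 * C * b j) ^ α j) * N =
      multiIndexWeight d α * (2 ^ ((3 * (d : ℝ) - 1) / 2) * (∏ j, (9 * C * b j) ^ α j) * N) := by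
  have h2 : (2 : ℝ) ^ ((2 * (d : ℝ) - 1) / 2) =
      2 ^ (-(d : ℝ) / 2) * 2 ^ ((3 * (d : ℝ) - 1) / 2) := by
    rw [← Real.rpow_add two_pos]; ring_nf
  have h3 : ∏ j, (3 * C * b j) ^ α j = (∏ j, (1 / 3 : ℝ) ^ α j) * ∏ j, (9 * C * b j) ^ α j := by
    rw [← Finset.prod_mul_distrib]
    exact Finset.prod_congr rfl fun j _ => by rw [← mul_pow]; ring
  rw [multiIndexWeight, h2, h3]; ring

/-- on a good cube there is a point where all derivatives are
pointwise controlled. -/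
theorem stmt_11 (d : ℕ) (hd : 1 ≤ d) (c : Fin d → ℝ)
    (Λ : Set (Fin d → ℝ)) (hΛ : Λ = Set.univ.pi fun j => Set.Icc (c j) (c j + 1))
    (U : Set (Fin d → ℝ)) (hU : IsOpen U) (hΛU : Λ ⊆ U)
    (f : (Fin d → ℝ) → ℂ) (hf : ContDiffOn ℝ (⊤ : ℕ∞) f U)
    (C : ℝ) (hC : 0 < C) (b : Fin d → ℝ) (hb : ∀ j, 0 < b j)
    (hfpos : 0 < eLpNorm f 2 (volume.restrict Λ))
    (hgood : ∀ α : Fin d → ℕ,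
      eLpNorm (multiD α f) 2 (volume.restrict Λ) <
        ENNReal.ofReal (2 ^ ((2 * (d : ℝ) - 1) / 2) * ∏ j, (3 * C * b j) ^ (α j)) *
          eLpNorm f 2 (volume.restrict Λ)) :
    ∃ x ∈ Λ, ∀ α : Fin d → ℕ,
      ‖multiD α f x‖ ≤
        2 ^ ((3 * (d : ℝ) - 1) / 2) * (∏ j, (9 * C * b j) ^ (α j)) *
          (eLpNorm f 2 (volume.restrict Λ)).toReal := by
  have hΛmeas : MeasurableSet Λ := hΛ ▸ MeasurableSet.univ_pi fun _ => measurableSet_Icc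
  have : IsProbabilityMeasure (volume.restrict Λ) :=
    ⟨by rw [Measure.restrict_apply_univ, hΛ, volume_pi_Icc_add_one]⟩
  have hfin : eLpNorm f 2 (volume.restrict Λ) ≠ ∞ := fun h => by
    simpa [multiD_zero, h] using hgood 0
  set N := (eLpNorm f 2 (volume.restrict Λ)).toReal
  set T : (Fin d → ℕ) → ℝ := fun α => 2 ^ ((3 * (d : ℝ) - 1) / 2) * (∏ j, (9 * C * b j) ^ α j) * N
  have hT (α : Fin d → ℕ) : 0 < T α := by
    have hN : 0 < N := ENNReal.toReal_pos hfpos.ne' hfin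
    have : 0 < ∏ j, (9 * C * b j) ^ α j := Finset.prod_pos fun j _ => by have := hb j; positivity
    positivity
  have hbound (α : Fin d → ℕ) : eLpNorm (multiD α f) 2 (volume.restrict Λ) ≤
      ENNReal.ofReal (multiIndexWeight d α) * ENNReal.ofReal (T α) := by
    refine (hgood α).le.trans_eq ?_
    have : 0 ≤ ∏ j, (3 * C * b j) ^ α j := Finset.prod_nonneg fun j _ => by have := hb j; positivity
    rw [← ENNReal.ofReal_toReal hfin, ← ENNReal.ofReal_mul (by positivity),
      two_rpow_mul_prod_eq_multiIndexWeight_mul, ENNReal.ofReal_mul (multiIndexWeight_nonneg d α)]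
  have hfreq := frequently_forall_enorm_lt_of_eLpNorm_le two_ne_zero ENNReal.ofNat_ne_top
    (fun α => ((hf.multiD hU α).continuousOn.mono hΛU).aestronglyMeasurable hΛmeas)
    (fun α => (ENNReal.ofReal_pos.2 (hT α)).ne') (fun _ => ENNReal.ofReal_ne_top) hbound
    (by simpa using tsum_ofReal_multiIndexWeight_sq_lt_one hd)
  obtain ⟨x, hx, hxΛ⟩ := (hfreq.and_eventually (ae_restrict_mem hΛmeas)).exists
  refine ⟨x, hxΛ, fun α => ?_⟩
  have hxα := hx α
  rw [← ofReal_norm, ENNReal.ofReal_lt_ofReal_iff (hT α)] at hxα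
  exact hxα.le
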